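/- arXiv:1302.6084 — 6 statements merged into one kernel-verified Lean document; each statement's English description precedes it below -/
import Mathlib

section
/- A symmetric tensor A of order m and dimension n is strictly copositive if and only if there exists a real number γ ≥ 0 such that A x^m + γ ‖x⁻‖^m > 0 for all x ∈ ℝ^n \ {0}, where x⁻ is the componentwise negative part of x. -/
open Finset

/-- `A x^m` for an `m`-order `n`-dimensional tensor `A`. -/
noncomputable def tpow {m n : ℕ} (A : (Fin m → Fin n) → ℝ) (x : Fin n → ℝ) : ℝ :=
  ∑ f : Fin m → Fin n, A f * ∏ k, x (f k)

/-- `A` is symmetric: entries invariant under permutations of indices. -/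
def SymT {m n : ℕ} (A : (Fin m → Fin n) → ℝ) : Prop :=
  ∀ (σ : Equiv.Perm (Fin m)) (f : Fin m → Fin n), A (f ∘ σ) = A f

/-- `A` is copositive. -/
def CoposT {m n : ℕ} (A : (Fin m → Fin n) → ℝ) : Prop :=
  ∀ x : Fin n → ℝ, (∀ i, 0 ≤ x i) → 0 ≤ tpow A x

/-- `A` is strictly copositive. -/
def StrictCoposT {m n : ℕ} (A : (Fin m → Fin n) → ℝ) : Prop :=
  ∀ x : Fin n → ℝ, (∀ i, 0 ≤ x i) → x ≠ 0 → 0 < tpow A x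

lemma tpow_smul {m n : ℕ} (A : (Fin m → Fin n) → ℝ) (t : ℝ) (x : Fin n → ℝ) :
    tpow A (t • x) = t ^ m * tpow A x := by
  unfold tpow
  rw [Finset.mul_sum]
  refine Finset.sum_congr rfl fun f _ => ?_
  simp only [Pi.smul_apply, smul_eq_mul]
  rw [Finset.prod_mul_distrib, Finset.prod_const, Finset.card_univ, Fintype.card_fin]
  ring

lemma npart_smul {n : ℕ} (t : ℝ) (ht : 0 ≤ t) (x : Fin n → ℝ) :
    (fun i => max (-((t • x) i)) 0 : Fin n → ℝ) = t • (fun i => max (-(x i)) 0) := by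
  funext i
  simp only [Pi.smul_apply, smul_eq_mul]
  rw [mul_max_of_nonneg _ _ ht, mul_neg, mul_zero]

lemma npart_eq_zero {n : ℕ} (x : Fin n → ℝ) (hx : ∀ i, 0 ≤ x i) :
    (fun i => max (-(x i)) 0 : Fin n → ℝ) = 0 := by
  funext i
  simp only [Pi.zero_apply]
  exact max_eq_right (neg_nonpos.mpr (hx i))

theorem stmt3 {m n : ℕ} (hm : 0 < m) (A : (Fin m → Fin n) → ℝ) (hA : SymT A) :
    StrictCoposT A ↔
      ∃ γ : ℝ, 0 ≤ γ ∧ ∀ x : Fin n → ℝ, x ≠ 0 →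
        0 < tpow A x + γ * ‖(fun i => max (-(x i)) 0 : Fin n → ℝ)‖ ^ m := by
  have hcont : Continuous (fun x : Fin n → ℝ => tpow A x) := by
    unfold tpow
    exact continuous_finset_sum _ fun f _ =>
      continuous_const.mul (continuous_finset_prod _ fun k _ => continuous_apply (f k))
  have hcontH : Continuous
      (fun x : Fin n → ℝ => ‖(fun i => max (-(x i)) 0 : Fin n → ℝ)‖ ^ m) := by
    exact ((continuous_pi fun i =>
      ((continuous_apply i).neg.max continuous_const)).norm).pow m
  constructor
  · intro h
    -- key claim: such a γ works on the unit sphere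
    have key : ∃ γ : ℝ, 0 ≤ γ ∧ ∀ x ∈ Metric.sphere (0 : Fin n → ℝ) 1,
        0 < tpow A x + γ * ‖(fun i => max (-(x i)) 0 : Fin n → ℝ)‖ ^ m := by
      set C : Set (Fin n → ℝ) :=
        Metric.sphere (0 : Fin n → ℝ) 1 ∩ {x | tpow A x ≤ 0} with hC
      have hCcomp : IsCompact C :=
        (isCompact_sphere 0 1).inter_right (isClosed_le hcont continuous_const)
      rcases C.eq_empty_or_nonempty with hCe | hCne
      · refine ⟨0, le_refl 0, fun x hx => ?_⟩
        have hxC : x ∉ C := by rw [hCe]; exact Set.notMem_empty x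
        have : ¬ tpow A x ≤ 0 := fun hle => hxC ⟨hx, hle⟩
        have hpos : 0 < tpow A x := lt_of_not_ge this
        have hnn : 0 ≤ ‖(fun i => max (-(x i)) 0 : Fin n → ℝ)‖ ^ m :=
          pow_nonneg (norm_nonneg _) m
        nlinarith
      · obtain ⟨x₀, hx₀C, hx₀min⟩ :=
          hCcomp.exists_isMinOn hCne (hcontH.continuousOn) |>.imp fun a => And.imp_right (isMinOn_iff.mp ·)
        obtain ⟨x₁, hx₁C, hx₁min⟩ :=
          hCcomp.exists_isMinOn hCne (hcont.continuousOn) |>.imp fun a => And.imp_right (isMinOn_iff.mp ·)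
        set δ := ‖(fun i => max (-(x₀ i)) 0 : Fin n → ℝ)‖ ^ m with hδ
        set M := tpow A x₁ with hM
        have hδpos : 0 < δ := by
          rcases lt_or_eq_of_le (pow_nonneg (norm_nonneg
            (fun i => max (-(x₀ i)) 0 : Fin n → ℝ)) m) with hlt | heq
          · exact hlt
          · exfalso
            have hnorm0 : ‖(fun i => max (-(x₀ i)) 0 : Fin n → ℝ)‖ = 0 := by
              by_contra hne
              have : (0:ℝ) < ‖(fun i => max (-(x₀ i)) 0 : Fin n → ℝ)‖ :=
                lt_of_le_of_ne (norm_nonneg _) (Ne.symm hne)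
              have := pow_pos this m
              rw [← heq] at this
              exact lt_irrefl 0 this
            have hfz : (fun i => max (-(x₀ i)) 0 : Fin n → ℝ) = 0 :=
              norm_eq_zero.mp hnorm0
            have hx₀nn : ∀ i, 0 ≤ x₀ i := by
              intro i
              have := congrFun hfz i
              simp only [Pi.zero_apply] at this
              have h1 := le_max_left (-(x₀ i)) 0
              rw [this] at h1
              linarith
            have hx₀ne : x₀ ≠ 0 := by
              intro h0
              have : ‖x₀‖ = 1 := mem_sphere_zero_iff_norm.mp hx₀C.1
              rw [h0, norm_zero] at this
              norm_num at this
            have h2 : tpow A x₀ ≤ 0 := hx₀C.2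
            have := h x₀ hx₀nn hx₀ne
            linarith
        have hM0 : M ≤ 0 := hx₁C.2
        have hγnn : 0 ≤ (1 - M) / δ := div_nonneg (by linarith) hδpos.le
        refine ⟨(1 - M) / δ, hγnn, fun x hx => ?_⟩
        by_cases hxC : x ∈ C
        · have h1 : δ ≤ ‖(fun i => max (-(x i)) 0 : Fin n → ℝ)‖ ^ m := hx₀min x hxC
          have h2 : M ≤ tpow A x := hx₁min x hxC
          have h3 : (1 - M) / δ * δ = 1 - M := div_mul_cancel₀ _ hδpos.ne'
          have h4 : (1 - M) / δ * δ ≤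
              (1 - M) / δ * ‖(fun i => max (-(x i)) 0 : Fin n → ℝ)‖ ^ m := by
            exact mul_le_mul_of_nonneg_left h1 hγnn
          nlinarith
        · have : ¬ tpow A x ≤ 0 := fun hle => hxC ⟨hx, hle⟩
          have hpos : 0 < tpow A x := lt_of_not_ge this
          have hnn : 0 ≤ (1 - M) / δ * ‖(fun i => max (-(x i)) 0 : Fin n → ℝ)‖ ^ m :=
            mul_nonneg hγnn (pow_nonneg (norm_nonneg _) m)
          linarith
    obtain ⟨γ, hγ0, hγ⟩ := key
    refine ⟨γ, hγ0, fun x hx => ?_⟩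
    have hx1 : 0 < ‖x‖ := norm_pos_iff.mpr hx
    set u := ‖x‖⁻¹ • x with hu_def
    have hu : u ∈ Metric.sphere (0 : Fin n → ℝ) 1 := by
      rw [mem_sphere_zero_iff_norm, hu_def, norm_smul, norm_inv, norm_norm,
        inv_mul_cancel₀ hx1.ne']
    have hxu : x = ‖x‖ • u := by
      rw [hu_def, smul_smul, mul_inv_cancel₀ hx1.ne', one_smul]
    have hkey := hγ u hu
    rw [hu_def, tpow_smul, npart_smul _ (inv_nonneg.mpr (norm_nonneg x)), norm_smul,
      norm_inv, norm_norm, mul_pow] at hkey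
    have hpos := mul_pos (pow_pos hx1 m) hkey
    have hinv : ‖x‖ ^ m * ‖x‖⁻¹ ^ m = 1 := by
      rw [← mul_pow, mul_inv_cancel₀ hx1.ne', one_pow]
    calc (0:ℝ) < _ := hpos
      _ = tpow A x + γ * ‖(fun i => max (-(x i)) 0 : Fin n → ℝ)‖ ^ m := by
        linear_combination
          (tpow A x + γ * ‖(fun i => max (-(x i)) 0 : Fin n → ℝ)‖ ^ m) * hinv
  · rintro ⟨γ, hγ0, hγ⟩ x hx0 hxne
    have := hγ x hxne
    rw [npart_eq_zero x hx0, norm_zero, zero_pow hm.ne', mul_zero, add_zero] at this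
    exact this
end

section
/- A symmetric tensor A of order m and dimension n is copositive if and only if no principal sub-tensor of A has a negative Z^{++}-eigenvalue, i.e., no principal sub-tensor B admits λ < 0 and a strictly positive vector v with v^T v = 1 and B v^{m-1} = λ v. -/
open Finset

/-- `(A_S x^{m-1})_i` : the `i`-th component of the contraction of the principal
sub-tensor of `A` on the index set `S` with `x` taken `m-1` times. -/
noncomputable def tcontr {m n : ℕ} (hm : 0 < m) (A : (Fin m → Fin n) → ℝ)
    (S : Finset (Fin n)) (x : Fin n → ℝ) (i : Fin n) : ℝ :=
  ∑ f ∈ Finset.univ.filter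
      (fun f : Fin m → Fin n => f ⟨0, hm⟩ = i ∧ ∀ k, f k ∈ S),
    A f * ∏ k ∈ Finset.univ.erase (⟨0, hm⟩ : Fin m), x (f k)


/-!
If `A` is not copositive, `tpow A` attains a negative minimum `μ` at some `w` on the compact set
of nonnegative unit vectors. By homogeneity, `tpow A z ≥ μ ‖z‖₂ ^ m` on the whole nonnegative
orthant, with equality at `w`. Moving `w` along a coordinate `i` in the support `S` of `w` stays
in the orthant, so the derivative of the difference vanishes there; by symmetry of `A` this says
`(A_S w^{m-1})_i = μ w_i`, a negative Z⁺⁺-eigenpair of the principal sub-tensor `A_S`.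
Conversely, Euler's identity `A x^m = ∑ i ∈ S, x_i (A_S x^{m-1})_i` for `x` supported on `S`
turns such an eigenpair into a nonnegative `x` with `A x^m = λ < 0`.
-/

namespace Tensor

variable {m n : ℕ} (A : (Fin m → Fin n) → ℝ)

lemma tpow_smul (t : ℝ) (x : Fin n → ℝ) : tpow A (t • x) = t ^ m * tpow A x := by
  simp only [tpow, mul_sum, Pi.smul_apply, smul_eq_mul, prod_mul_distrib, prod_const,
    card_univ, Fintype.card_fin]
  exact sum_congr rfl fun f _ => by ring

lemma tpow_zero (hm : 0 < m) : tpow A 0 = 0 := by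
  simpa [zero_pow hm.ne'] using tpow_smul A 0 0

lemma continuous_tpow : Continuous (tpow A) := by
  unfold tpow
  fun_prop

variable (hm : 0 < m)
include hm

lemma tcontr_congr {S : Finset (Fin n)} {x y : Fin n → ℝ} (h : ∀ i ∈ S, x i = y i) :
    tcontr hm A S x = tcontr hm A S y := by
  funext i
  refine sum_congr rfl fun f hf => ?_
  rw [prod_congr rfl fun k _ => h _ ((mem_filter.mp hf).2.2 k)]

lemma tcontr_eq_of_subset {S T : Finset (Fin n)} (hST : S ⊆ T) {x : Fin n → ℝ}
    (hx : ∀ i ∉ S, x i = 0) {i : Fin n} (hi : i ∈ S) :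
    tcontr hm A T x i = tcontr hm A S x i := by
  refine (sum_subset (fun f hf => ?_) fun f hfT hfS => ?_).symm
  · simp only [mem_filter, mem_univ, true_and] at hf ⊢
    exact ⟨hf.1, fun k => hST (hf.2 k)⟩
  simp only [mem_filter, mem_univ, true_and, not_and, not_forall] at hfT hfS
  obtain ⟨k, hk⟩ := hfS hfT.1
  have hk0 : k ≠ ⟨0, hm⟩ := by rintro rfl; exact hk (hfT.1 ▸ hi)
  rw [prod_eq_zero (mem_erase.mpr ⟨hk0, mem_univ k⟩) (hx _ hk), mul_zero]

lemma sum_mul_tcontr_univ (x h : Fin n → ℝ) :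
    ∑ i, h i * tcontr hm A univ x i =
      ∑ f : Fin m → Fin n, A f * ((∏ k ∈ univ.erase ⟨0, hm⟩, x (f k)) * h (f ⟨0, hm⟩)) := by
  rw [← sum_fiberwise univ (fun f : Fin m → Fin n => f ⟨0, hm⟩)]
  refine sum_congr rfl fun i _ => ?_
  simp only [tcontr, mem_univ, implies_true, and_true, mul_sum]
  exact sum_congr rfl fun f hf => by rw [(mem_filter.mp hf).2]; ring

lemma tpow_eq_sum_mul_tcontr_univ (x : Fin n → ℝ) :
    tpow A x = ∑ i, x i * tcontr hm A univ x i := by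
  rw [sum_mul_tcontr_univ A hm, tpow]
  exact sum_congr rfl fun f _ => by rw [prod_erase_mul _ _ (mem_univ _)]

lemma tpow_eq_sum_mul_tcontr {S : Finset (Fin n)} {x : Fin n → ℝ} (hx : ∀ i ∉ S, x i = 0) :
    tpow A x = ∑ i ∈ S, x i * tcontr hm A S x i := by
  rw [tpow_eq_sum_mul_tcontr_univ A hm, ← sum_subset (subset_univ S)
    fun i _ hi => by rw [hx i hi, zero_mul]]
  exact sum_congr rfl fun i hi => by rw [tcontr_eq_of_subset A hm (subset_univ S) hx hi]

lemma tpow_piecewise_of_tcontr_eq_mul {S : Finset (Fin n)} {v : Fin n → ℝ} {lam : ℝ}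
    (heig : ∀ i ∈ S, tcontr hm A S v i = lam * v i) :
    tpow A (S.piecewise v 0) = lam * ∑ i ∈ S, v i ^ 2 := by
  have hv : ∀ i ∈ S, S.piecewise v 0 i = v i := fun i hi => piecewise_eq_of_mem _ _ _ hi
  rw [tpow_eq_sum_mul_tcontr A hm fun i hi => piecewise_eq_of_notMem _ _ _ hi,
    tcontr_congr A hm hv, mul_sum]
  exact sum_congr rfl fun i hi => by rw [hv i hi, heig i hi]; ring

end Tensor

namespace SymT

variable {m n : ℕ} {A : (Fin m → Fin n) → ℝ}

lemma sum_mul_comp_perm (hA : SymT A) (σ : Equiv.Perm (Fin m)) (G : (Fin m → Fin n) → ℝ) :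
    ∑ f, A f * G (f ∘ σ) = ∑ f, A f * G f :=
  Fintype.sum_equiv (Equiv.arrowCongr σ.symm (Equiv.refl _)) _ _ fun f => by
    show _ = A (f ∘ σ) * G (f ∘ σ)
    rw [hA σ f]

lemma sum_mul_prod_erase_mul (hA : SymT A) (x h : Fin n → ℝ) (k k' : Fin m) :
    ∑ f, A f * ((∏ j ∈ univ.erase k, x (f j)) * h (f k)) =
      ∑ f, A f * ((∏ j ∈ univ.erase k', x (f j)) * h (f k')) := by
  rw [← hA.sum_mul_comp_perm (Equiv.swap k k')]
  refine sum_congr rfl fun f _ => ?_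
  simp only [Function.comp_apply, Equiv.swap_apply_left]
  congr 2
  exact prod_equiv (Equiv.swap k k') (fun j => by simp [Equiv.swap_apply_eq_iff]) fun _ _ => rfl

end SymT

def nonnegUnitSphere (n : ℕ) : Set (Fin n → ℝ) := {w | 0 ≤ w ∧ ∑ i, w i ^ 2 = 1}

lemma isCompact_nonnegUnitSphere (n : ℕ) : IsCompact (nonnegUnitSphere n) := by
  refine (isCompact_Icc (b := 1)).of_isClosed_subset
    (isClosed_Ici.inter (isClosed_eq (by fun_prop) continuous_const)) fun w hw => ⟨hw.1, ?_⟩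
  intro i
  have : w i ^ 2 ≤ 1 := hw.2 ▸ single_le_sum (fun j _ => sq_nonneg (w j)) (mem_univ i)
  exact (sq_le_one_iff₀ (hw.1 i)).mp this

lemma sum_sq_pos_of_ne_zero {n : ℕ} {z : Fin n → ℝ} (hz : z ≠ 0) : 0 < ∑ i, z i ^ 2 := by
  obtain ⟨i, hi⟩ := Function.ne_iff.mp hz
  exact sum_pos' (fun j _ => sq_nonneg (z j)) ⟨i, mem_univ i, sq_pos_of_ne_zero hi⟩

lemma inv_sqrt_smul_mem_nonnegUnitSphere {n : ℕ} {z : Fin n → ℝ} (hz : 0 ≤ z) (hz0 : z ≠ 0) :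
    (√(∑ i, z i ^ 2))⁻¹ • z ∈ nonnegUnitSphere n := by
  have hpos := sum_sq_pos_of_ne_zero hz0
  refine ⟨smul_nonneg (by positivity) hz, ?_⟩
  simp only [Pi.smul_apply, smul_eq_mul, mul_pow, ← mul_sum, inv_pow, Real.sq_sqrt hpos.le]
  exact inv_mul_cancel₀ hpos.ne'

lemma hasDerivAt_sum_sq_add_smul {n : ℕ} (x h : Fin n → ℝ) :
    HasDerivAt (fun t : ℝ => ∑ i, (x + t • h) i ^ 2) (2 * ∑ i, x i * h i) 0 := by
  have hcoord (i : Fin n) : HasDerivAt (fun t : ℝ => (x + t • h) i) (h i) 0 := by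
    simpa using ((hasDerivAt_id (0 : ℝ)).mul_const (h i)).const_add (x i)
  refine (HasDerivAt.fun_sum fun i (_ : i ∈ univ) => (hcoord i).pow 2).congr_deriv ?_
  simp only [Nat.cast_ofNat, zero_smul, Pi.add_apply, Pi.zero_apply, add_zero,
    Nat.add_one_sub_one, pow_one, mul_sum]
  exact sum_congr rfl fun i _ => by ring

namespace Tensor

variable {m n : ℕ} {A : (Fin m → Fin n) → ℝ} (hm : 0 < m)
include hm

lemma hasDerivAt_tpow_add_smul (hA : SymT A) (x h : Fin n → ℝ) :
    HasDerivAt (fun t : ℝ => tpow A (x + t • h)) (m * ∑ i, h i * tcontr hm A univ x i) 0 := by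
  have hprod (f : Fin m → Fin n) : HasDerivAt (fun t : ℝ => ∏ k, (x + t • h) (f k))
      (∑ k, (∏ j ∈ univ.erase k, x (f j)) * h (f k)) 0 := by
    simpa using HasDerivAt.fun_finsetProd (u := univ) fun k _ =>
      ((hasDerivAt_id (0 : ℝ)).smul_const (h (f k))).const_add (x (f k))
  refine (HasDerivAt.fun_sum fun f (_ : f ∈ univ) => (hprod f).const_mul (A f)).congr_deriv ?_
  rw [sum_mul_tcontr_univ A hm]
  calc _ = ∑ k : Fin m, ∑ f, A f * ((∏ j ∈ univ.erase k, x (f j)) * h (f k)) := by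
        simp only [mul_sum]; exact sum_comm
    _ = _ := by simp [hA.sum_mul_prod_erase_mul x h _ ⟨0, hm⟩]

lemma tpow_mul_le_of_isMinOn {w : Fin n → ℝ} (hw : IsMinOn (tpow A) (nonnegUnitSphere n) w)
    {z : Fin n → ℝ} (hz : 0 ≤ z) : tpow A w * √(∑ i, z i ^ 2) ^ m ≤ tpow A z := by
  rcases eq_or_ne z 0 with rfl | hz0
  · simp [tpow_zero A hm, zero_pow hm.ne']
  set r := √(∑ i, z i ^ 2)
  have hr : 0 < r := Real.sqrt_pos.mpr (sum_sq_pos_of_ne_zero hz0)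
  calc tpow A w * r ^ m ≤ tpow A (r⁻¹ • z) * r ^ m := by
        gcongr
        exact hw (inv_sqrt_smul_mem_nonnegUnitSphere hz hz0)
    _ = tpow A z := by
        rw [tpow_smul, inv_pow, mul_comm, ← mul_assoc, mul_inv_cancel₀ (by positivity), one_mul]

lemma tcontr_univ_eq_of_isMinOn (hA : SymT A) {w : Fin n → ℝ}
    (hwK : w ∈ nonnegUnitSphere n) (hw : IsMinOn (tpow A) (nonnegUnitSphere n) w)
    {i : Fin n} (hi : 0 < w i) : tcontr hm A univ w i = tpow A w * w i := by
  set e : Fin n → ℝ := Pi.single i 1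
  set φ : ℝ → ℝ := fun t => tpow A (w + t • e) - tpow A w * √(∑ j, (w + t • e) j ^ 2) ^ m
  have hφ0 : φ 0 = 0 := by simp [φ, hwK.2]
  have hmin : IsLocalMin φ 0 := by
    filter_upwards [Ioo_mem_nhds (neg_lt_zero.mpr hi) hi] with t ht
    have hpos : 0 ≤ w + t • e := fun j => by
      rcases eq_or_ne j i with rfl | hj
      · simp only [Pi.zero_apply, Pi.add_apply, Pi.smul_apply, Pi.single_eq_same, smul_eq_mul,
          mul_one, e]
        linarith [ht.1]
      · simpa [e, hj] using hwK.1 j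
    rw [hφ0, sub_nonneg]
    exact tpow_mul_le_of_isMinOn hm hw hpos
  have hsq := (hasDerivAt_sum_sq_add_smul w e).sqrt (by simp [hwK.2])
  have hφ' := (hasDerivAt_tpow_add_smul hm hA w e).sub ((hsq.pow m).const_mul (tpow A w))
  have := hmin.hasDerivAt_eq_zero hφ'
  simp only [e, Pi.single_apply, ite_mul, mul_ite, one_mul, mul_one, zero_mul, mul_zero,
    sum_ite_eq', mem_univ, if_true, zero_smul, add_zero, hwK.2, Real.sqrt_one, one_pow] at this
  exact mul_left_cancel₀ (Nat.cast_ne_zero.mpr hm.ne') (by linear_combination this)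

lemma exists_isMinOn_tpow_neg (hcop : ¬ CoposT A) :
    ∃ w ∈ nonnegUnitSphere n, IsMinOn (tpow A) (nonnegUnitSphere n) w ∧ tpow A w < 0 := by
  obtain ⟨y, hy, hy_neg⟩ : ∃ y, 0 ≤ y ∧ tpow A y < 0 := by
    simpa [CoposT, Pi.le_def] using hcop
  have hy0 : y ≠ 0 := by rintro rfl; simp [tpow_zero A hm] at hy_neg
  obtain ⟨w, hwK, hw⟩ := (isCompact_nonnegUnitSphere n).exists_isMinOn
    ⟨_, inv_sqrt_smul_mem_nonnegUnitSphere hy hy0⟩ (continuous_tpow A).continuousOn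
  exact ⟨w, hwK, hw, neg_of_mul_neg_left
    ((tpow_mul_le_of_isMinOn hm hw hy).trans_lt hy_neg) (by positivity)⟩

end Tensor

theorem stmt10 {m n : ℕ} (hm : 0 < m) (A : (Fin m → Fin n) → ℝ) (hA : SymT A) :
    CoposT A ↔
      ¬ ∃ (S : Finset (Fin n)) (lam : ℝ) (v : Fin n → ℝ),
        S.Nonempty ∧ lam < 0 ∧ (∀ i ∈ S, 0 < v i) ∧ (∑ i ∈ S, v i ^ 2 = 1) ∧
        ∀ i ∈ S, tcontr hm A S v i = lam * v i := by
  constructor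
  · rintro hcop ⟨S, lam, v, -, hlam, hv, hv1, heig⟩
    have hval := hcop (S.piecewise v 0) fun i => by
      by_cases hi : i ∈ S <;> simp [hi, (hv i _).le]
    rw [Tensor.tpow_piecewise_of_tcontr_eq_mul A hm heig, hv1] at hval
    linarith
  · intro hno
    by_contra hcop
    obtain ⟨w, hwK, hw, hw_neg⟩ := Tensor.exists_isMinOn_tpow_neg hm hcop
    set S := univ.filter (0 < w ·)
    have hw0 : ∀ i ∉ S, w i = 0 := fun i hi =>
      le_antisymm (not_lt.mp fun h => hi (mem_filter.mpr ⟨mem_univ i, h⟩)) (hwK.1 i)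
    have hS1 : ∑ i ∈ S, w i ^ 2 = 1 := by
      rw [sum_subset (subset_univ S) fun i _ hi => by rw [hw0 i hi, sq, mul_zero], hwK.2]
    refine hno ⟨S, tpow A w, w, nonempty_of_sum_ne_zero (hS1 ▸ one_ne_zero), hw_neg,
      fun i hi => (mem_filter.mp hi).2, hS1, fun i hi => ?_⟩
    rw [← Tensor.tcontr_eq_of_subset A hm (subset_univ S) hw0 hi]
    exact Tensor.tcontr_univ_eq_of_isMinOn hm hA hwK hw (mem_filter.mp hi).2
end

section
/- Let A be a copositive symmetric tensor of order m and dimension n, and suppose the diagonal entry a_{i i ... i} = 0 for some index i. Then a_{i i ... i j} ≥ 0 for all j = 1,...,n (i.e., every entry with index i repeated m−1 times and one other index j is nonnegative). -/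
open Finset

theorem stmt13 {m n : ℕ} (hm : 0 < m) (A : (Fin m → Fin n) → ℝ) (hA : SymT A)
    (hc : CoposT A) (i : Fin n) (hd : A (fun _ => i) = 0) :
    ∀ j : Fin n, 0 ≤ A (Function.update (fun _ => i) (⟨0, hm⟩ : Fin m) j) := by
  classical
  intro j
  rcases eq_or_ne j i with hji | hij
  · rw [hji]
    have : Function.update (fun _ => i) (⟨0, hm⟩ : Fin m) i = (fun _ => i) :=
      Function.update_eq_self _ _
    rw [this, hd]
  set z : Fin m := ⟨0, hm⟩ with hz
  set a : ℝ := A (Function.update (fun _ => i) z j) with ha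
  -- symmetry: every single-update entry equals a
  have hsym : ∀ k : Fin m, A (Function.update (fun _ => i) k j) = a := by
    intro k
    have hswap : (Function.update (fun _ => i) z j) ∘ (Equiv.swap k z) =
        Function.update (fun _ => i) k j := by
      funext l
      rcases eq_or_ne l k with rfl | hlk
      · rw [Function.comp_apply, Equiv.swap_apply_left, Function.update_self,
          Function.update_self]
      · rcases eq_or_ne l z with rfl | hlz
        · rw [Function.comp_apply, Equiv.swap_apply_right,
            Function.update_of_ne (Ne.symm hlk), Function.update_of_ne hlk]
        · rw [Function.comp_apply, Equiv.swap_apply_of_ne_of_ne hlk hlz,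
            Function.update_of_ne hlz, Function.update_of_ne hlk]
    rw [← hswap, hA]
  set x : ℝ → Fin n → ℝ := fun t k => if k = i then 1 else if k = j then t else 0 with hx
  have hxnn : ∀ t : ℝ, 0 ≤ t → ∀ k, 0 ≤ x t k := by
    intro t ht k
    simp only [hx]
    split_ifs <;> norm_num [ht]
  set P : (Fin m → Fin n) → Prop := fun f => ∃ k, f = Function.update (fun _ => i) k j with hP
  set L : (Fin m → Fin n) → ℝ := fun f => if P f then A f else 0 with hL
  -- the sum of limits is m * a
  have hginj : ∀ k ∈ (univ : Finset (Fin m)), ∀ k' ∈ univ,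
      Function.update (fun _ => i) k j = Function.update (fun _ => i) k' j → k = k' := by
    intro k _ k' _ h
    by_contra hne
    have := congrFun h k
    rw [Function.update_self, Function.update_of_ne hne] at this
    exact hij this
  have hsum : ∑ f : Fin m → Fin n, L f = m * a := by
    have h1 : ∑ f : Fin m → Fin n, L f
        = ∑ f ∈ univ.filter P, A f := (Finset.sum_filter _ _).symm
    have h2 : univ.filter P
        = univ.image (fun k : Fin m => Function.update (fun _ => i) k j) := by
      ext f
      simp only [Finset.mem_filter, Finset.mem_univ, true_and, Finset.mem_image, hP]
      constructor
      · rintro ⟨k, rfl⟩; exact ⟨k, rfl⟩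
      · rintro ⟨k, rfl⟩; exact ⟨k, rfl⟩
    rw [h1, h2, Finset.sum_image hginj]
    simp [hsym, Finset.card_univ, mul_comm]
  -- pointwise nonnegativity of the quotient
  have hnn : ∀ᶠ t in nhdsWithin (0:ℝ) (Set.Ioi 0), 0 ≤ tpow A (x t) / t := by
    filter_upwards [self_mem_nhdsWithin] with t ht
    exact div_nonneg (hc (x t) (hxnn t (le_of_lt ht))) (le_of_lt ht)
  -- the limit computation
  have hlim : Filter.Tendsto (fun t => tpow A (x t) / t) (nhdsWithin (0:ℝ) (Set.Ioi 0))
      (nhds (m * a)) := by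
    have heq : ∀ t : ℝ, tpow A (x t) / t = ∑ f : Fin m → Fin n, (A f * ∏ k, x t (f k)) / t := by
      intro t; rw [tpow, Finset.sum_div]
    simp only [heq]
    rw [← hsum]
    apply tendsto_finset_sum
    intro f _
    by_cases hall : ∀ k, f k = i ∨ f k = j
    · -- product is t ^ c
      set c : ℕ := (univ.filter (fun k => f k = j)).card with hcc
      have hprod : ∀ t : ℝ, (∏ k, x t (f k)) = t ^ c := by
        intro t
        have : ∀ k : Fin m, x t (f k) = if f k = j then t else 1 := by
          intro k
          rcases hall k with h | h <;> simp [hx, h, hij, Ne.symm hij]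
        rw [Finset.prod_congr rfl (fun k _ => this k), Finset.prod_ite,
          Finset.prod_const, Finset.prod_const_one, mul_one]
      simp only [hprod]
      rcases Nat.eq_zero_or_pos c with hc0 | hcpos
      · -- c = 0 : f is constant i, so A f = 0
        have hfi : f = fun _ => i := by
          funext l
          rcases hall l with h | h
          · exact h
          · exfalso
            have : l ∈ univ.filter (fun k => f k = j) := by simp [h]
            rw [Finset.card_eq_zero.mp hc0] at this
            exact absurd this (Finset.notMem_empty l)
        have hAf : A f = 0 := by rw [hfi, hd]
        have hLf : L f = 0 := by simp [hL, hAf]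
        rw [hLf]
        simp only [hAf, zero_mul, zero_div]
        exact tendsto_const_nhds
      · rcases Nat.lt_or_ge c 2 with hc1 | hc2
        · -- c = 1
          have hc1' : c = 1 := le_antisymm (Nat.lt_succ_iff.mp hc1) hcpos
          obtain ⟨k₀, hk₀⟩ := Finset.card_eq_one.mp (hcc ▸ hc1')
          have hfk : f = Function.update (fun _ => i) k₀ j := by
            funext l
            rcases eq_or_ne l k₀ with rfl | hlk
            · have : l ∈ univ.filter (fun k => f k = j) := by rw [hk₀]; exact Finset.mem_singleton_self l
              simp only [Finset.mem_filter] at this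
              rw [this.2, Function.update_self]
            · have : l ∉ univ.filter (fun k => f k = j) := by
                rw [hk₀]; simp [hlk]
              simp only [Finset.mem_filter, Finset.mem_univ, true_and] at this
              rw [Function.update_of_ne hlk]
              rcases hall l with h | h
              · exact h
              · exact absurd h this
          have hLf : L f = A f := by
            have : P f := ⟨k₀, hfk⟩
            simp [hL, this]
          rw [hLf, hc1']
          apply Filter.Tendsto.congr' (f₁ := fun _ => A f)
          · filter_upwards [self_mem_nhdsWithin] with t ht
            have ht' : t ≠ 0 := ne_of_gt ht
            rw [pow_one, mul_div_assoc, div_self ht', mul_one]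
          · exact tendsto_const_nhds
        · -- c ≥ 2
          have hLf : L f = 0 := by
            have : ¬ P f := by
              rintro ⟨k, rfl⟩
              have : univ.filter (fun l => Function.update (fun _ => i) k j l = j) = {k} := by
                ext l
                simp only [Finset.mem_filter, Finset.mem_univ, true_and, Finset.mem_singleton]
                constructor
                · intro h
                  by_contra hlk
                  rw [Function.update_of_ne hlk] at h
                  exact hij h.symm
                · rintro rfl; exact Function.update_self _ _ _
              rw [hcc, this, Finset.card_singleton] at hc2
              omega
            simp [hL, this]
          rw [hLf]
          apply Filter.Tendsto.congr' (f₁ := fun t => A f * t ^ (c - 1))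
          · filter_upwards [self_mem_nhdsWithin] with t ht
            have ht0 : t ≠ 0 := ne_of_gt ht
            have : t ^ c = t ^ (c - 1) * t := by
              rw [← pow_succ]
              congr 1
              omega
            rw [this, ← mul_assoc, mul_div_assoc, div_self ht0, mul_one]
          · have : Filter.Tendsto (fun t : ℝ => A f * t ^ (c - 1)) (nhds 0)
                (nhds (A f * (0:ℝ) ^ (c - 1))) :=
              (continuous_const.mul (continuous_pow _)).tendsto 0
            rw [zero_pow (by omega : c - 1 ≠ 0), mul_zero] at this
            exact this.mono_left nhdsWithin_le_nhds
    · -- some index outside {i, j} : term is identically 0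
      push_neg at hall
      obtain ⟨k₀, hk₀i, hk₀j⟩ := hall
      have hLf : L f = 0 := by
        have : ¬ P f := by
          rintro ⟨k, rfl⟩
          rcases eq_or_ne k₀ k with rfl | hne
          · exact hk₀j (Function.update_self _ _ _)
          · exact hk₀i (Function.update_of_ne hne _ _)
        simp [hL, this]
      rw [hLf]
      have hzero : ∀ t : ℝ, (A f * ∏ k, x t (f k)) / t = 0 := by
        intro t
        have : x t (f k₀) = 0 := by simp [hx, hk₀i, hk₀j]
        rw [Finset.prod_eq_zero (Finset.mem_univ k₀) this, mul_zero, zero_div]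
      simp only [hzero]
      exact tendsto_const_nhds
  have hfin : 0 ≤ (m : ℝ) * a := ge_of_tendsto hlim hnn
  have hmpos : (0:ℝ) < m := by exact_mod_cast hm
  nlinarith
end

section
/- Let A be a symmetric tensor of order 3 and dimension 2 with a_{111} = a_{222} = 0. Then A is copositive if and only if all entries of A are nonnegative. -/
open Finset

/-!
Write `a = A ![0,0,1]` and `b = A ![0,1,1]` (the paper's `a₁₁₂`, `a₁₂₂`). By symmetry every
entry of `A` is `0`, `a` or `b`, and `A x³ = 3 x₀ x₁ (a x₀ + b x₁)`. On the open positive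
quadrant copositivity therefore says `a x₀ + b x₁ ≥ 0`, and letting one coordinate tend to `0`
gives `a ≥ 0` and `b ≥ 0`.
-/

open Filter Topology

theorem nonneg_of_forall_pos_add_mul_nonneg {a b : ℝ} (h : ∀ t > 0, 0 ≤ a + b * t) : 0 ≤ a := by
  have hlim : Tendsto (fun t : ℝ => a + b * t) (𝓝[>] 0) (𝓝 a) := by
    have : Continuous (fun t : ℝ => a + b * t) := by fun_prop
    simpa using (this.tendsto 0).mono_left nhdsWithin_le_nhds
  exact ge_of_tendsto hlim (eventually_nhdsWithin_of_forall h)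

theorem coposT_of_forall_nonneg {m n : ℕ} {A : (Fin m → Fin n) → ℝ} (hA : ∀ f, 0 ≤ A f) :
    CoposT A := fun _ hx =>
  sum_nonneg fun f _ => mul_nonneg (hA f) (prod_nonneg fun _ _ => hx _)

theorem SymT.apply_eq_of_exists_perm {m n : ℕ} {A : (Fin m → Fin n) → ℝ} (hA : SymT A)
    {f g : Fin m → Fin n} (h : ∃ σ : Equiv.Perm (Fin m), f ∘ σ = g) : A g = A f := by
  obtain ⟨σ, rfl⟩ := h
  exact hA σ f

theorem univ_fin_three_fin_two : (univ : Finset (Fin 3 → Fin 2)) =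
    {![0,0,0], ![0,0,1], ![0,1,0], ![0,1,1], ![1,0,0], ![1,0,1], ![1,1,0], ![1,1,1]} := by
  decide

theorem exists_perm_comp_mem_sorted_fin_three_fin_two (f : Fin 3 → Fin 2) :
    ∃ σ : Equiv.Perm (Fin 3), f ∘ σ ∈ [![0,0,0], ![0,0,1], ![0,1,1], ![1,1,1]] := by
  revert f
  decide

namespace SymT

variable {A : (Fin 3 → Fin 2) → ℝ}

theorem forall_apply_of_sorted (hA : SymT A) {P : ℝ → Prop} (h000 : P (A ![0,0,0]))
    (h001 : P (A ![0,0,1])) (h011 : P (A ![0,1,1])) (h111 : P (A ![1,1,1]))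
    (f : Fin 3 → Fin 2) : P (A f) := by
  obtain ⟨σ, hσ⟩ := exists_perm_comp_mem_sorted_fin_three_fin_two f
  rw [← hA σ f]
  simp only [List.mem_cons, List.not_mem_nil, or_false] at hσ
  rcases hσ with h | h | h | h <;> rwa [h]

theorem tpow_fin_three_fin_two (hA : SymT A) (x : Fin 2 → ℝ) :
    tpow A x = A ![0,0,0] * x 0 ^ 3 + 3 * A ![0,0,1] * x 0 ^ 2 * x 1
      + 3 * A ![0,1,1] * x 0 * x 1 ^ 2 + A ![1,1,1] * x 1 ^ 3 := by
  have e010 : A ![0,1,0] = A ![0,0,1] := hA.apply_eq_of_exists_perm (by decide)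
  have e100 : A ![1,0,0] = A ![0,0,1] := hA.apply_eq_of_exists_perm (by decide)
  have e101 : A ![1,0,1] = A ![0,1,1] := hA.apply_eq_of_exists_perm (by decide)
  have e110 : A ![1,1,0] = A ![0,1,1] := hA.apply_eq_of_exists_perm (by decide)
  rw [tpow, univ_fin_three_fin_two]
  simp only [Fin.isValue, Fin.prod_univ_three, mem_insert, Matrix.vecCons_inj, zero_ne_one,
    one_ne_zero, and_true, and_false, and_self, mem_singleton, or_self, not_false_eq_true,
    sum_insert, sum_singleton, Matrix.cons_val_zero, Matrix.cons_val_one, Matrix.cons_val,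
    e010, e100, e101, e110]
  ring

end SymT

theorem stmt14 (A : (Fin 3 → Fin 2) → ℝ) (hA : SymT A)
    (h1 : A ![0, 0, 0] = 0) (h2 : A ![1, 1, 1] = 0) :
    CoposT A ↔ ∀ f : Fin 3 → Fin 2, 0 ≤ A f := by
  set a := A ![0,0,1]
  set b := A ![0,1,1]
  have hform : ∀ x, tpow A x = 3 * x 0 * x 1 * (a * x 0 + b * x 1) := fun x => by
    rw [hA.tpow_fin_three_fin_two, h1, h2]
    ring
  refine ⟨fun hcop => ?_, coposT_of_forall_nonneg⟩
  have hpos : ∀ s t : ℝ, 0 < s → 0 < t → 0 ≤ a * s + b * t := fun s t hs ht => by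
    have := hcop ![s, t] (by simp [Fin.forall_fin_two, hs.le, ht.le])
    rw [hform] at this
    exact nonneg_of_mul_nonneg_right this (show 0 < 3 * s * t by positivity)
  have ha : 0 ≤ a := nonneg_of_forall_pos_add_mul_nonneg fun t ht => by
    simpa using hpos 1 t one_pos ht
  have hb : 0 ≤ b := nonneg_of_forall_pos_add_mul_nonneg fun t ht => by
    simpa [add_comm] using hpos t 1 ht one_pos
  exact hA.forall_apply_of_sorted h1.ge ha hb h2.ge
end

section
/- Let A be a copositive symmetric tensor of order 3 and dimension 3 with a_{111} = a_{222} = a_{333} = 0. Then a_{112}, a_{113}, a_{221}, a_{223}, a_{331}, a_{332} are all nonnegative and 2 a_{123} + a_{112} + a_{113} + a_{221} + a_{223} + a_{331} + a_{332} ≥ 0. -/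
open Finset

/-! On a vector supported on two coordinates `i ≠ j`, symmetry reduces the cubic form to
`3 x_i x_j (a_iij x_i + a_ijj x_j)` once `a_iii = a_jjj = 0`; letting `x_i / x_j → ∞` forces
`a_iij ≥ 0`. The last inequality is copositivity at the all-ones vector, where each entry appears
as often as its index multiset has orderings, so the form equals three times the stated sum. -/

theorem tpow_one {m n : ℕ} (A : (Fin m → Fin n) → ℝ) : tpow A 1 = ∑ f, A f := by
  simp [tpow]

theorem tpow_three {n : ℕ} (A : (Fin 3 → Fin n) → ℝ) (x : Fin n → ℝ) :
    tpow A x = ∑ i, ∑ j, ∑ k, A ![i, j, k] * (x i * x j * x k) := by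
  simp [tpow, ← (Fin.consEquiv fun _ => Fin n).sum_comp, Fintype.sum_prod_type, Fin.prod_univ_succ,
    mul_assoc, Fin.consEquiv, Subsingleton.elim (default : Fin 0 → Fin n) ![]]

theorem sum_mul_eq_add_of_support {n : ℕ} {x : Fin n → ℝ} {i j : Fin n} (hij : i ≠ j)
    (hx : ∀ k, k ≠ i → k ≠ j → x k = 0) (g : Fin n → ℝ) :
    ∑ k, x k * g k = x i * g i + x j * g j :=
  Fintype.sum_eq_add i j hij fun k hk => by rw [hx k hk.1 hk.2, zero_mul]

theorem nonneg_of_forall_pos_mul_add_nonneg {K : Type*} [Field K] [LinearOrder K]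
    [IsStrictOrderedRing K] {a b : K} (h : ∀ s > 0, 0 ≤ a * s + b) : 0 ≤ a := by
  by_contra! ha
  have hs := h ((|b| + 1) / -a) (by have := neg_pos.2 ha; positivity)
  rw [mul_div_assoc', div_neg, mul_comm, mul_div_cancel_right₀ _ ha.ne] at hs
  linarith [le_abs_self b]

namespace SymT

variable {n : ℕ} {A : (Fin 3 → Fin n) → ℝ}

theorem apply_comm_left (hA : SymT A) (a b c : Fin n) : A ![b, a, c] = A ![a, b, c] := by
  convert hA (Equiv.swap 0 1) ![a, b, c] using 2
  ext k; fin_cases k <;> rfl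

theorem apply_comm_right (hA : SymT A) (a b c : Fin n) : A ![a, c, b] = A ![a, b, c] := by
  convert hA (Equiv.swap 1 2) ![a, b, c] using 2
  ext k; fin_cases k <;> rfl

theorem tpow_eq_of_support_pair (hA : SymT A) {x : Fin n → ℝ} {i j : Fin n} (hij : i ≠ j)
    (hx : ∀ k, k ≠ i → k ≠ j → x k = 0) :
    tpow A x = A ![i, i, i] * x i ^ 3 + 3 * A ![i, i, j] * x i ^ 2 * x j +
      3 * A ![j, j, i] * x i * x j ^ 2 + A ![j, j, j] * x j ^ 3 := by
  have hAx : ∀ a b c, A ![a, b, c] * (x a * x b * x c) = x a * (x b * (x c * A ![a, b, c])) :=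
    fun _ _ _ => by ring
  simp_rw [tpow_three, hAx, ← mul_sum, sum_mul_eq_add_of_support hij hx]
  rw [hA.apply_comm_right i j i, hA.apply_comm_left i j i, hA.apply_comm_left j i j,
    hA.apply_comm_right j i j]
  ring

end SymT

theorem SymT.sum_fin_three {A : (Fin 3 → Fin 3) → ℝ} (hA : SymT A) :
    ∑ f, A f = A ![0, 0, 0] + A ![1, 1, 1] + A ![2, 2, 2] + 6 * A ![0, 1, 2] +
      3 * (A ![0, 0, 1] + A ![0, 0, 2] + A ![1, 1, 0] + A ![1, 1, 2] + A ![2, 2, 0] +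
        A ![2, 2, 1]) := by
  -- `simp` uses the permutative lemmas `apply_comm_*` as ordered rewrites, sorting every index triple
  simp only [← tpow_one, tpow_three, Fin.sum_univ_three, Pi.one_apply, mul_one,
    hA.apply_comm_left, hA.apply_comm_right]
  ring

theorem CoposT.apply_nonneg_of_diag_eq_zero {n : ℕ} {A : (Fin 3 → Fin n) → ℝ} (hc : CoposT A)
    (hA : SymT A) {i j : Fin n} (hij : i ≠ j) (hi : A ![i, i, i] = 0) (hj : A ![j, j, j] = 0) :
    0 ≤ A ![i, i, j] := by
  refine nonneg_of_forall_pos_mul_add_nonneg (b := A ![j, j, i]) fun s hs => ?_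
  have hx : ∀ k, k ≠ i → k ≠ j → (Pi.single i s + Pi.single j 1 : Fin n → ℝ) k = 0 :=
    fun k hki hkj => by simp [hki, hkj]
  have hx₀ : 0 ≤ (Pi.single i s + Pi.single j 1 : Fin n → ℝ) :=
    add_nonneg (Pi.single_nonneg.2 hs.le) (Pi.single_nonneg.2 zero_le_one)
  have hcx := hc _ hx₀
  simp only [hA.tpow_eq_of_support_pair hij hx, Pi.add_apply, Pi.single_eq_same,
    Pi.single_eq_of_ne hij, Pi.single_eq_of_ne hij.symm, hi, hj] at hcx
  have : 0 ≤ 3 * s * (A ![i, i, j] * s + A ![j, j, i]) := by convert hcx using 1; ring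
  exact (mul_nonneg_iff_of_pos_left (by positivity)).1 this

theorem stmt16 (A : (Fin 3 → Fin 3) → ℝ) (hA : SymT A) (hc : CoposT A)
    (h1 : A ![0, 0, 0] = 0) (h2 : A ![1, 1, 1] = 0) (h3 : A ![2, 2, 2] = 0) :
    0 ≤ A ![0, 0, 1] ∧ 0 ≤ A ![0, 0, 2] ∧ 0 ≤ A ![1, 1, 0] ∧
    0 ≤ A ![1, 1, 2] ∧ 0 ≤ A ![2, 2, 0] ∧ 0 ≤ A ![2, 2, 1] ∧
    0 ≤ 2 * A ![0, 1, 2] + A ![0, 0, 1] + A ![0, 0, 2] + A ![1, 1, 0] +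
        A ![1, 1, 2] + A ![2, 2, 0] + A ![2, 2, 1] := by
  have hpair {i j : Fin 3} (hij : i ≠ j) := hc.apply_nonneg_of_diag_eq_zero hA hij
  have hsum : 0 ≤ ∑ f, A f := tpow_one A ▸ hc 1 fun _ => zero_le_one
  rw [hA.sum_fin_three, h1, h2, h3] at hsum
  exact ⟨hpair (by decide) h1 h2, hpair (by decide) h1 h3, hpair (by decide) h2 h1,
    hpair (by decide) h2 h3, hpair (by decide) h3 h1, hpair (by decide) h3 h2, by linarith⟩
end

section
/- Let A be a symmetric tensor of order m and dimension n. If A is copositive, then every H^{++}-eigenvalue of every principal sub-tensor of A is nonnegative; if A is strictly copositive, then every H^{++}-eigenvalue of every principal sub-tensor of A is positive. -/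
open Finset

open Finset

lemma key {m n : ℕ} (hm : 0 < m) (A : (Fin m → Fin n) → ℝ)
    (S : Finset (Fin n)) (v : Fin n → ℝ) :
    tpow A (fun j => if j ∈ S then v j else 0)
      = ∑ i ∈ S, v i * tcontr hm A S v i := by
  classical
  set y : Fin n → ℝ := fun j => if j ∈ S then v j else 0 with hy
  have h1 : tpow A y = ∑ f ∈ Finset.univ.filter (fun f : Fin m → Fin n => ∀ k, f k ∈ S),
      A f * ∏ k, y (f k) := by
    rw [tpow, ← Finset.sum_filter_add_sum_filter_not Finset.univ
      (fun f : Fin m → Fin n => ∀ k, f k ∈ S)]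
    have h2 : ∑ f ∈ Finset.univ.filter (fun f : Fin m → Fin n => ¬ ∀ k, f k ∈ S),
        A f * ∏ k, y (f k) = 0 := by
      apply Finset.sum_eq_zero
      intro f hf
      simp only [Finset.mem_filter, not_forall] at hf
      obtain ⟨k, hk⟩ := hf.2
      have : ∏ k, y (f k) = 0 :=
        Finset.prod_eq_zero (Finset.mem_univ k) (by simp [hy, hk])
      rw [this, mul_zero]
    rw [h2, add_zero]
  rw [h1, ← Finset.sum_fiberwise_of_maps_to
    (g := fun f : Fin m → Fin n => f ⟨0, hm⟩)
    (fun f hf => by simp only [Finset.mem_filter] at hf; exact hf.2 _)]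
  refine Finset.sum_congr rfl (fun i hi => ?_)
  rw [tcontr, Finset.mul_sum]
  rw [Finset.filter_filter]
  refine Finset.sum_congr (by apply Finset.filter_congr; intro f _; tauto) (fun f hf => ?_)
  simp only [Finset.mem_filter] at hf
  have h0 : f ⟨0, hm⟩ = i := hf.2.1
  have hprod : ∏ k, y (f k) = y (f ⟨0, hm⟩) * ∏ k ∈ Finset.univ.erase (⟨0, hm⟩ : Fin m), y (f k) := by
    rw [← Finset.mul_prod_erase Finset.univ _ (Finset.mem_univ (⟨0, hm⟩ : Fin m))]
  have hy0 : y (f ⟨0, hm⟩) = v i := by simp [hy, h0, hi]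
  have hprod2 : ∏ k ∈ Finset.univ.erase (⟨0, hm⟩ : Fin m), y (f k)
      = ∏ k ∈ Finset.univ.erase (⟨0, hm⟩ : Fin m), v (f k) :=
    Finset.prod_congr rfl (fun k _ => by simp [hy, hf.2.2 k])
  rw [hprod, hy0, hprod2]; ring

theorem stmt18 {m n : ℕ} (hm : 0 < m) (A : (Fin m → Fin n) → ℝ) (hA : SymT A) :
    (CoposT A →
      ∀ (S : Finset (Fin n)) (lam : ℝ) (v : Fin n → ℝ),
        S.Nonempty → (∀ i ∈ S, 0 < v i) →
        (∀ i ∈ S, tcontr hm A S v i = lam * v i ^ (m - 1)) → 0 ≤ lam) ∧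
    (StrictCoposT A →
      ∀ (S : Finset (Fin n)) (lam : ℝ) (v : Fin n → ℝ),
        S.Nonempty → (∀ i ∈ S, 0 < v i) →
        (∀ i ∈ S, tcontr hm A S v i = lam * v i ^ (m - 1)) → 0 < lam) := by
  classical
  have main : ∀ (S : Finset (Fin n)) (lam : ℝ) (v : Fin n → ℝ),
      S.Nonempty → (∀ i ∈ S, 0 < v i) →
      (∀ i ∈ S, tcontr hm A S v i = lam * v i ^ (m - 1)) →
      tpow A (fun j => if j ∈ S then v j else 0) = lam * ∑ i ∈ S, v i ^ m ∧
      0 < ∑ i ∈ S, v i ^ m := by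
    intro S lam v hS hv heig
    constructor
    · rw [key hm A S v, Finset.mul_sum]
      refine Finset.sum_congr rfl (fun i hi => ?_)
      rw [heig i hi]
      have : v i * v i ^ (m - 1) = v i ^ m := by
        rw [← pow_succ']
        congr 1
        omega
      rw [← mul_assoc, mul_comm (v i) lam, mul_assoc, this]
    · exact Finset.sum_pos (fun i hi => pow_pos (hv i hi) m) hS
  have hynn : ∀ (S : Finset (Fin n)) (v : Fin n → ℝ), (∀ i ∈ S, 0 < v i) →
      ∀ i, 0 ≤ (fun j => if j ∈ S then v j else 0) i := by
    intro S v hv i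
    by_cases h : i ∈ S
    · simpa [h] using (hv i h).le
    · simp [h]
  constructor
  · intro hcop S lam v hS hv heig
    obtain ⟨heq, hpos⟩ := main S lam v hS hv heig
    have h0 : (0:ℝ) ≤ lam * ∑ i ∈ S, v i ^ m := by
      rw [← heq]; exact hcop _ (hynn S v hv)
    by_contra h
    push_neg at h
    nlinarith
  · intro hcop S lam v hS hv heig
    obtain ⟨heq, hpos⟩ := main S lam v hS hv heig
    obtain ⟨i0, hi0⟩ := hS
    have h0 : (0:ℝ) < lam * ∑ i ∈ S, v i ^ m := by
      rw [← heq]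
      refine hcop _ (hynn S v hv) ?_
      intro h
      have := congrFun h i0
      simp only [hi0, if_true, Pi.zero_apply] at this
      exact (hv i0 hi0).ne' this
    by_contra h
    push_neg at h
    nlinarith
end
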